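/- Define the extension Q̄^{(n)}(y_1,y_2) = (1/2πi)∮_{Γ_0} dw (1+w)^{y_1−y_2−1}/(2^{y_1−y_2} w^n) for all y_1, y_2 ∈ ℤ (so Q̄^{(n)} agrees with Q^n when y_1 − y_2 ≥ n). Then Q^{−1} Q̄^{(n)} = Q̄^{(n)} Q^{−1} = Q̄^{(n−1)} for n > 1, and Q^{−1} Q̄^{(1)} = Q̄^{(1)} Q^{−1} = 0, where Q^{−1} = I + 2∇⁺ with ∇⁺f(x) = f(x+1) − f(x). -/

import Mathlib

open Complex Metric

/-- The analytic extension `Q̄^{(n)}(y₁,y₂) = (1/2πi)∮ dw (1+w)^{y₁−y₂−1}/(2^{y₁−y₂} w^n)`. -/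
noncomputable def Qbar (n : ℕ) (y₁ y₂ : ℤ) : ℂ :=
  (2 * Real.pi * I)⁻¹ *
    ∮ w in C(0, (1 : ℝ) / 2), (1 + w) ^ (y₁ - y₂ - 1) / ((2 : ℂ) ^ (y₁ - y₂) * w ^ n)

/-!
Write `d = y₁ - y₂` and `g_n(d, w) = (1+w)^{d-1} / (2^d wⁿ)` for the integrand of `Q̄^{(n)}`.
Both `Q⁻¹` acting on the left and on the right shift `d` to `d + 1`, and since
`2 g_n(d+1, w) = (1 + w) g_n(d, w)`, pointwise
`2 g_n(d+1, w) - g_n(d, w) = w g_n(d, w) = g_{n-1}(d, w)`.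
Integrating gives `Q⁻¹ Q̄^{(n)} = Q̄^{(n-1)}`; for `n = 1` the integrand `g_0` is holomorphic
on the closed disc `|w| ≤ 1/2`, so `Q̄^{(0)} = 0` by Cauchy's theorem.
-/

noncomputable def qbarIntegrand (n : ℕ) (d : ℤ) (w : ℂ) : ℂ :=
  (1 + w) ^ (d - 1) / ((2 : ℂ) ^ d * w ^ n)

lemma Qbar_eq_circleIntegral (n : ℕ) (y₁ y₂ : ℤ) :
    Qbar n y₁ y₂ = (2 * Real.pi * I)⁻¹ * ∮ w in C(0, (1 : ℝ) / 2), qbarIntegrand n (y₁ - y₂) w :=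
  rfl

lemma Qbar_congr_sub {n : ℕ} {y₁ y₂ z₁ z₂ : ℤ} (h : y₁ - y₂ = z₁ - z₂) :
    Qbar n y₁ y₂ = Qbar n z₁ z₂ := by
  simp only [Qbar_eq_circleIntegral, h]

lemma one_add_ne_zero_of_norm_lt_one {w : ℂ} (hw : ‖w‖ < 1) : 1 + w ≠ 0 := by
  intro h
  rw [show w = -1 by linear_combination h] at hw
  simp at hw

lemma differentiableAt_qbarIntegrand (n : ℕ) (d : ℤ) {w : ℂ} (h₁ : 1 + w ≠ 0)
    (hw : w ^ n ≠ 0) : DifferentiableAt ℂ (qbarIntegrand n d) w :=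
  (((differentiableAt_const _).add differentiableAt_id).zpow (Or.inl h₁)).div
    ((differentiableAt_const _).mul (differentiableAt_id.pow n))
    (mul_ne_zero (zpow_ne_zero d two_ne_zero) hw)

lemma circleIntegrable_qbarIntegrand (n : ℕ) (d : ℤ) :
    CircleIntegrable (qbarIntegrand n d) 0 (1 / 2) := by
  refine ContinuousOn.circleIntegrable (by norm_num) fun w hw => ?_
  have hw : ‖w‖ = 1 / 2 := by simpa using hw
  have hw₀ : w ≠ 0 := by rintro rfl; norm_num at hw
  exact (differentiableAt_qbarIntegrand n d (one_add_ne_zero_of_norm_lt_one (by linarith))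
    (pow_ne_zero n hw₀)).continuousAt.continuousWithinAt

lemma two_mul_qbarIntegrand_add_one_sub {w : ℂ} (h₁ : 1 + w ≠ 0) (hw : w ≠ 0) (m : ℕ) (d : ℤ) :
    2 * qbarIntegrand (m + 1) (d + 1) w - qbarIntegrand (m + 1) d w = qbarIntegrand m d w := by
  have hpow : (1 + w) ^ (d + 1 - 1) = (1 + w) ^ (d - 1) * (1 + w) := by
    rw [add_sub_cancel_right, ← zpow_add_one₀ h₁, sub_add_cancel]
  have h₂ : (2 : ℂ) ^ d ≠ 0 := zpow_ne_zero d two_ne_zero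
  simp only [qbarIntegrand, hpow, zpow_add_one₀ (two_ne_zero' ℂ), pow_succ]
  field_simp
  ring

lemma Qbar_succ_left_relation (m : ℕ) (y₁ y₂ : ℤ) :
    -Qbar (m + 1) y₁ y₂ + 2 * Qbar (m + 1) (y₁ + 1) y₂ = Qbar m y₁ y₂ := by
  have hd : y₁ + 1 - y₂ = y₁ - y₂ + 1 := by ring
  have hpointwise : Set.EqOn
      (fun w => 2 * qbarIntegrand (m + 1) (y₁ - y₂ + 1) w - qbarIntegrand (m + 1) (y₁ - y₂) w)
      (qbarIntegrand m (y₁ - y₂)) (sphere 0 (1 / 2)) := by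
    intro w hw
    have hw : ‖w‖ = 1 / 2 := by simpa using hw
    have hw₀ : w ≠ 0 := by rintro rfl; norm_num at hw
    exact two_mul_qbarIntegrand_add_one_sub (one_add_ne_zero_of_norm_lt_one (by linarith)) hw₀ _ _
  have hdouble : CircleIntegrable (fun w => 2 * qbarIntegrand (m + 1) (y₁ - y₂ + 1) w) 0 (1 / 2) :=
    (circleIntegrable_qbarIntegrand _ _).const_smul
  have hint := circleIntegral.integral_congr (by norm_num) hpointwise
  rw [circleIntegral.integral_sub hdouble (circleIntegrable_qbarIntegrand _ _),
    circleIntegral.integral_const_mul] at hint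
  rw [Qbar_eq_circleIntegral, Qbar_eq_circleIntegral, Qbar_eq_circleIntegral, hd, ← hint]
  ring

lemma Qbar_zero (y₁ y₂ : ℤ) : Qbar 0 y₁ y₂ = 0 := by
  have hdiff : DifferentiableOn ℂ (qbarIntegrand 0 (y₁ - y₂)) (ball 0 1) := fun w hw =>
    (differentiableAt_qbarIntegrand 0 _ (one_add_ne_zero_of_norm_lt_one (by simpa using hw))
      (pow_zero w ▸ one_ne_zero)).differentiableWithinAt
  rw [Qbar_eq_circleIntegral,
    (hdiff.diffContOnCl_ball (closedBall_subset_ball (by norm_num))).circleIntegral_eq_zero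
      (by norm_num), mul_zero]

/-- `Q⁻¹ Q̄^{(n)} = Q̄^{(n)} Q⁻¹ = Q̄^{(n−1)}` for `n > 1`, and
`Q⁻¹ Q̄^{(1)} = Q̄^{(1)} Q⁻¹ = 0`, where `Q⁻¹ = I + 2∇⁺` acts as the kernel
`(Q⁻¹ A)(y₁,y₂) = −A(y₁,y₂) + 2A(y₁+1,y₂)` on the left and
`(A Q⁻¹)(y₁,y₂) = −A(y₁,y₂) + 2A(y₁,y₂−1)` on the right. -/
theorem Qbar_relations (n : ℕ) (y₁ y₂ : ℤ) :
    (1 < n → -Qbar n y₁ y₂ + 2 * Qbar n (y₁ + 1) y₂ = Qbar (n - 1) y₁ y₂) ∧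
    (1 < n → -Qbar n y₁ y₂ + 2 * Qbar n y₁ (y₂ - 1) = Qbar (n - 1) y₁ y₂) ∧
    (-Qbar 1 y₁ y₂ + 2 * Qbar 1 (y₁ + 1) y₂ = 0) ∧
    (-Qbar 1 y₁ y₂ + 2 * Qbar 1 y₁ (y₂ - 1) = 0) := by
  have hright (k : ℕ) : Qbar k y₁ (y₂ - 1) = Qbar k (y₁ + 1) y₂ := Qbar_congr_sub (by ring)
  have hleft (k : ℕ) (hk : 0 < k) :
      -Qbar k y₁ y₂ + 2 * Qbar k (y₁ + 1) y₂ = Qbar (k - 1) y₁ y₂ := by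
    obtain ⟨m, rfl⟩ := Nat.exists_eq_add_one_of_ne_zero hk.ne'
    exact Qbar_succ_left_relation m y₁ y₂
  refine ⟨fun hn => hleft n (by omega), fun hn => hright n ▸ hleft n (by omega), ?_, ?_⟩
  · rw [hleft 1 one_pos, Qbar_zero]
  · rw [hright, hleft 1 one_pos, Qbar_zero]
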